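/- Let M_{k,N} be the truncation of the sensing-cost MDP M_k that forces a sensing action after N consecutive blind actions. Then for every root state j and every N ≥ 0, 0 ≤ V*_{M_{k,N}}(j) − V*_{M_k}(j) ≤ α^N · k/(1−α). -/
import Mathlib


open Finset

variable {S A : Type*} [Fintype S] [Fintype A] [DecidableEq S] [Nonempty S] [Nonempty A]

/-- Belief distribution after taking the blind action sequence `l` from root state `s`:
the `s`-th row of the product of the transition matrices along `l`. -/
noncomputable def belief (T : A → Matrix S S ℝ) (s : S) (l : List A) : S → ℝ :=
  fun s' => ((l.map T).prod) s s'

/-- Expected one-step cost of action `a` under belief `B`. -/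
def beliefCost (C : A → S → ℝ) (B : S → ℝ) (a : A) : ℝ := ∑ s, B s * C a s

/-- Belief obtained from `B` by one further (blind) transition under action `a`. -/
def beliefStep (T : A → Matrix S S ℝ) (B : S → ℝ) (a : A) : S → ℝ :=
  fun s' => ∑ s, B s * T a s s'

/-- Bellman optimality equation for the sensing-cost MDP `M_k`: at every state
`(s, l)` the value is the minimum, over actions `a`, of the blind continuation and
the sensing continuation. -/
def IsBellmanMk (T : A → Matrix S S ℝ) (C : A → S → ℝ) (α k : ℝ)
    (V : S → List A → ℝ) : Prop :=
  ∀ (s : S) (l : List A),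
    V s l = Finset.univ.inf' Finset.univ_nonempty (fun a : A =>
      min (beliefCost C (belief T s l) a + α * V s (l ++ [a]))
          (beliefCost C (belief T s l) a + k
            + α * ∑ j, beliefStep T (belief T s l) a j * V j []))

/-- Bellman optimality equations for the depth-`N` truncation `M_{k,N}`: below layer `N`
both blind and sensing actions are available; at layer `N` sensing is forced. -/
def IsBellmanMkTrunc (T : A → Matrix S S ℝ) (C : A → S → ℝ) (α k : ℝ) (N : ℕ)
    (V : S → List A → ℝ) : Prop :=
  (∀ (s : S) (l : List A), l.length < N →
    V s l = Finset.univ.inf' Finset.univ_nonempty (fun a : A =>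
      min (beliefCost C (belief T s l) a + α * V s (l ++ [a]))
          (beliefCost C (belief T s l) a + k
            + α * ∑ j, beliefStep T (belief T s l) a j * V j []))) ∧
  (∀ (s : S) (l : List A), l.length = N →
    V s l = Finset.univ.inf' Finset.univ_nonempty (fun a : A =>
      beliefCost C (belief T s l) a + k
        + α * ∑ j, beliefStep T (belief T s l) a j * V j []))

set_option linter.unusedSectionVars false

section Aux

variable (T : A → Matrix S S ℝ) (C : A → S → ℝ)

/-- Point-mass belief at `j`. -/
noncomputable def delta (j : S) : S → ℝ := fun s' => if j = s' then 1 else 0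

lemma belief_nil (j : S) : belief T j [] = delta j := by
  funext s'
  simp [belief, delta, Matrix.one_apply]

lemma belief_cons (s : S) (a : A) (l : List A) :
    belief T s (a :: l) = fun s' => ∑ t, T a s t * belief T t l s' := by
  funext s'
  simp [belief, Matrix.mul_apply]

lemma belief_append (s : S) (l : List A) (a : A) :
    belief T s (l ++ [a]) = beliefStep T (belief T s l) a := by
  funext s'
  simp [belief, beliefStep, Matrix.mul_apply]

lemma belief_nonneg (hT : ∀ a s s', 0 ≤ T a s s') (s : S) (l : List A) (s' : S) :
    0 ≤ belief T s l s' := by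
  induction l generalizing s with
  | nil => simp only [belief, List.map_nil, List.prod_nil, Matrix.one_apply]; split <;> norm_num
  | cons a l ih =>
    rw [belief_cons]
    exact Finset.sum_nonneg fun t _ => mul_nonneg (hT a s t) (ih t)

lemma belief_sum (hTsum : ∀ a s, ∑ s', T a s s' = 1) (s : S) (l : List A) :
    ∑ s', belief T s l s' = 1 := by
  induction l generalizing s with
  | nil => simp [belief, Matrix.one_apply]
  | cons a l ih =>
    rw [belief_cons]
    rw [Finset.sum_comm]
    simp_rw [← Finset.mul_sum]
    simp_rw [fun t => ih t]
    simpa using hTsum a s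

end Aux

section Aux2

variable (T : A → Matrix S S ℝ) (C : A → S → ℝ)

/-- `n`-step value iteration on beliefs for `M_k`. -/
noncomputable def fIter (α k : ℝ) : ℕ → (S → ℝ) → ℝ
  | 0 => fun _ => 0
  | (n + 1) => fun B => Finset.univ.inf' Finset.univ_nonempty (fun a : A =>
      min (beliefCost C B a + α * fIter α k n (beliefStep T B a))
          (beliefCost C B a + k + α * ∑ j, beliefStep T B a j * fIter α k n (delta j)))

lemma inf'_sub_inf'_le {g h : A → ℝ} {c : ℝ} (hc : ∀ a, g a - h a ≤ c) :
    Finset.univ.inf' Finset.univ_nonempty g - Finset.univ.inf' Finset.univ_nonempty h ≤ c := by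
  obtain ⟨a, -, ha⟩ := Finset.exists_mem_eq_inf' Finset.univ_nonempty h
  have h1 : Finset.univ.inf' Finset.univ_nonempty g ≤ g a :=
    Finset.inf'_le g (Finset.mem_univ a)
  have := hc a
  rw [ha]; linarith

lemma min_sub_min_le {x y x' y' : ℝ} : min x y - min x' y' ≤ max (x - x') (y - y') := by
  rcases le_total x' y' with h | h
  · rw [min_eq_left h]
    have := min_le_left x y
    have := le_max_left (x - x') (y - y')
    linarith
  · rw [min_eq_right h]
    have := min_le_right x y
    have := le_max_right (x - x') (y - y')
    linarith

lemma prob_sum_le {P x : S → ℝ} {c : ℝ} (hP : ∀ j, 0 ≤ P j) (hP1 : ∑ j, P j = 1)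
    (hx : ∀ j, x j ≤ c) : ∑ j, P j * x j ≤ c := by
  calc ∑ j, P j * x j ≤ ∑ j, P j * c :=
        Finset.sum_le_sum fun j _ => mul_le_mul_of_nonneg_left (hx j) (hP j)
    _ = c := by rw [← Finset.sum_mul, hP1, one_mul]
lemma prob_sum_abs_le {P x : S → ℝ} {c : ℝ} (hP : ∀ j, 0 ≤ P j) (hP1 : ∑ j, P j = 1)
    (hx : ∀ j, |x j| ≤ c) : |∑ j, P j * x j| ≤ c := by
  calc |∑ j, P j * x j| ≤ ∑ j, |P j * x j| := Finset.abs_sum_le_sum_abs _ _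
    _ = ∑ j, P j * |x j| := by
        refine Finset.sum_congr rfl fun j _ => ?_
        rw [abs_mul, abs_of_nonneg (hP j)]
    _ ≤ c := prob_sum_le hP hP1 hx

end Aux2

section Jensen

variable (T : A → Matrix S S ℝ) (C : A → S → ℝ)

lemma beliefCost_mix (w : S → ℝ) (Cc : S → S → ℝ) (a : A) :
    beliefCost C (fun s => ∑ j, w j * Cc j s) a = ∑ j, w j * beliefCost C (Cc j) a := by
  simp only [beliefCost, Finset.sum_mul]
  rw [Finset.sum_comm]
  simp [Finset.mul_sum, mul_assoc]

lemma beliefStep_mix (w : S → ℝ) (Cc : S → S → ℝ) (a : A) :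
    beliefStep T (fun s => ∑ j, w j * Cc j s) a
      = fun s' => ∑ j, w j * beliefStep T (Cc j) a s' := by
  funext s'
  simp only [beliefStep, Finset.sum_mul]
  rw [Finset.sum_comm]
  simp [Finset.mul_sum, mul_assoc]

lemma fIter_jensen {α k : ℝ} (hα : 0 ≤ α) :
    ∀ (n : ℕ) (w : S → ℝ) (Cc : S → S → ℝ), (∀ j, 0 ≤ w j) → (∑ j, w j = 1) →
    ∑ j, w j * fIter T C α k n (Cc j) ≤ fIter T C α k n (fun s => ∑ j, w j * Cc j s) := by
  intro n
  induction n with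
  | zero => intro w Cc hw hw1; simp [fIter]
  | succ n ih =>
    intro w Cc hw hw1
    set B : S → ℝ := fun s => ∑ j, w j * Cc j s with hB
    obtain ⟨a, -, ha⟩ := Finset.exists_mem_eq_inf' Finset.univ_nonempty
      (fun a : A => min (beliefCost C B a + α * fIter T C α k n (beliefStep T B a))
          (beliefCost C B a + k + α * ∑ i, beliefStep T B a i * fIter T C α k n (delta i)))
    have hRHS : fIter T C α k (n + 1) B
        = min (beliefCost C B a + α * fIter T C α k n (beliefStep T B a))
            (beliefCost C B a + k + α * ∑ i, beliefStep T B a i * fIter T C α k n (delta i)) := by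
      rw [fIter]; exact ha
    have step1 : ∀ j, fIter T C α k (n + 1) (Cc j)
        ≤ min (beliefCost C (Cc j) a + α * fIter T C α k n (beliefStep T (Cc j) a))
            (beliefCost C (Cc j) a + k
              + α * ∑ i, beliefStep T (Cc j) a i * fIter T C α k n (delta i)) := by
      intro j
      rw [fIter]
      exact Finset.inf'_le _ (Finset.mem_univ a)
    have hbc : ∑ j, w j * beliefCost C (Cc j) a = beliefCost C B a :=
      (beliefCost_mix C w Cc a).symm
    have hstep : (fun s' => ∑ j, w j * beliefStep T (Cc j) a s') = beliefStep T B a :=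
      (beliefStep_mix T w Cc a).symm
    have hbl : ∑ j, w j * (beliefCost C (Cc j) a + α * fIter T C α k n (beliefStep T (Cc j) a))
        ≤ beliefCost C B a + α * fIter T C α k n (beliefStep T B a) := by
      have h1 : ∑ j, w j * fIter T C α k n (beliefStep T (Cc j) a)
          ≤ fIter T C α k n (beliefStep T B a) := by
        have := ih w (fun j => beliefStep T (Cc j) a) hw hw1
        rwa [show (fun s => ∑ j, w j * beliefStep T (Cc j) a s) = beliefStep T B a from hstep] at this
      calc ∑ j, w j * (beliefCost C (Cc j) a + α * fIter T C α k n (beliefStep T (Cc j) a))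
          = ∑ j, w j * beliefCost C (Cc j) a
            + α * ∑ j, w j * fIter T C α k n (beliefStep T (Cc j) a) := by
            rw [Finset.mul_sum]; rw [← Finset.sum_add_distrib]; congr 1; funext j; ring
        _ ≤ beliefCost C B a + α * fIter T C α k n (beliefStep T B a) := by
            rw [hbc]; nlinarith [mul_le_mul_of_nonneg_left h1 hα]
    have hse : ∑ j, w j * (beliefCost C (Cc j) a + k
          + α * ∑ i, beliefStep T (Cc j) a i * fIter T C α k n (delta i))
        = beliefCost C B a + k + α * ∑ i, beliefStep T B a i * fIter T C α k n (delta i) := by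
      have h2 : ∑ j, w j * ∑ i, beliefStep T (Cc j) a i * fIter T C α k n (delta i)
          = ∑ i, beliefStep T B a i * fIter T C α k n (delta i) := by
        rw [← hstep]
        simp only [Finset.mul_sum]
        rw [Finset.sum_comm]
        congr 1; funext i
        rw [Finset.sum_mul]
        congr 1; funext j
        ring
      calc ∑ j, w j * (beliefCost C (Cc j) a + k
            + α * ∑ i, beliefStep T (Cc j) a i * fIter T C α k n (delta i))
          = ∑ j, w j * beliefCost C (Cc j) a + (∑ j, w j) * k
            + α * ∑ j, w j * ∑ i, beliefStep T (Cc j) a i * fIter T C α k n (delta i) := by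
            rw [Finset.sum_mul, Finset.mul_sum, ← Finset.sum_add_distrib, ← Finset.sum_add_distrib]
            congr 1; funext j; ring
        _ = _ := by rw [hbc, hw1, one_mul, h2]
    calc ∑ j, w j * fIter T C α k (n + 1) (Cc j)
        ≤ ∑ j, w j * min (beliefCost C (Cc j) a + α * fIter T C α k n (beliefStep T (Cc j) a))
            (beliefCost C (Cc j) a + k
              + α * ∑ i, beliefStep T (Cc j) a i * fIter T C α k n (delta i)) :=
          Finset.sum_le_sum fun j _ => mul_le_mul_of_nonneg_left (step1 j) (hw j)
      _ ≤ min (∑ j, w j * (beliefCost C (Cc j) a + α * fIter T C α k n (beliefStep T (Cc j) a)))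
            (∑ j, w j * (beliefCost C (Cc j) a + k
              + α * ∑ i, beliefStep T (Cc j) a i * fIter T C α k n (delta i))) := by
          refine le_min (Finset.sum_le_sum fun j _ => mul_le_mul_of_nonneg_left (min_le_left _ _) (hw j))
            (Finset.sum_le_sum fun j _ => mul_le_mul_of_nonneg_left (min_le_right _ _) (hw j))
      _ ≤ min (beliefCost C B a + α * fIter T C α k n (beliefStep T B a))
            (beliefCost C B a + k + α * ∑ i, beliefStep T B a i * fIter T C α k n (delta i)) :=
          min_le_min hbl (le_of_eq hse)
      _ = fIter T C α k (n + 1) B := hRHS.symm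

end Jensen

section Approx

variable (T : A → Matrix S S ℝ) (C : A → S → ℝ)

lemma fIter_approx {α k : ℝ} (hα0 : 0 ≤ α)
    (hTnonneg : ∀ a s s', 0 ≤ T a s s') (hTsum : ∀ a s, ∑ s', T a s s' = 1)
    (V : S → List A → ℝ) (hV : IsBellmanMk T C α k V)
    (M : ℝ) (hM : ∀ s l, |V s l| ≤ M) :
    ∀ (n : ℕ) (s : S) (l : List A), |V s l - fIter T C α k n (belief T s l)| ≤ α ^ n * M := by
  intro n
  induction n with
  | zero => intro s l; simpa [fIter] using hM s l
  | succ n ih =>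
    intro s l
    set B := belief T s l with hB
    have hPnn : ∀ (a : A) (j : S), 0 ≤ beliefStep T B a j := fun a j => by
      rw [hB, ← belief_append]; exact belief_nonneg T hTnonneg s _ j
    have hP1 : ∀ a : A, ∑ j, beliefStep T B a j = 1 := fun a => by
      simp only [hB, ← belief_append]; exact belief_sum T hTsum s _
    have key : ∀ a : A,
        |min (beliefCost C B a + α * V s (l ++ [a]))
            (beliefCost C B a + k + α * ∑ j, beliefStep T B a j * V j [])
          - min (beliefCost C B a + α * fIter T C α k n (beliefStep T B a))
            (beliefCost C B a + k + α * ∑ j, beliefStep T B a j * fIter T C α k n (delta j))|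
          ≤ α ^ (n + 1) * M := by
      intro a
      have hbl : |(beliefCost C B a + α * V s (l ++ [a]))
          - (beliefCost C B a + α * fIter T C α k n (beliefStep T B a))|
          ≤ α ^ (n + 1) * M := by
        have hih := ih s (l ++ [a])
        rw [belief_append] at hih
        have e1 : (beliefCost C B a + α * V s (l ++ [a]))
            - (beliefCost C B a + α * fIter T C α k n (beliefStep T B a))
            = α * (V s (l ++ [a]) - fIter T C α k n (beliefStep T B a)) := by ring
        rw [e1, abs_mul, abs_of_nonneg hα0]
        calc α * |V s (l ++ [a]) - fIter T C α k n (beliefStep T B a)|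
            ≤ α * (α ^ n * M) := mul_le_mul_of_nonneg_left hih hα0
          _ = α ^ (n + 1) * M := by ring
      have hse : |(beliefCost C B a + k + α * ∑ j, beliefStep T B a j * V j [])
          - (beliefCost C B a + k + α * ∑ j, beliefStep T B a j * fIter T C α k n (delta j))|
          ≤ α ^ (n + 1) * M := by
        have hsum : |∑ j, beliefStep T B a j * (V j [] - fIter T C α k n (delta j))|
            ≤ α ^ n * M := by
          refine prob_sum_abs_le (hPnn a) (hP1 a) fun j => ?_
          have := ih j []
          rwa [belief_nil] at this
        have e2 : (beliefCost C B a + k + α * ∑ j, beliefStep T B a j * V j [])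
            - (beliefCost C B a + k + α * ∑ j, beliefStep T B a j * fIter T C α k n (delta j))
            = α * ∑ j, beliefStep T B a j * (V j [] - fIter T C α k n (delta j)) := by
          have e3 : ∑ j, beliefStep T B a j * (V j [] - fIter T C α k n (delta j))
              = ∑ j, beliefStep T B a j * V j []
                - ∑ j, beliefStep T B a j * fIter T C α k n (delta j) := by
            rw [← Finset.sum_sub_distrib]; congr 1; funext j; ring
          rw [e3]; ring
        rw [e2, abs_mul, abs_of_nonneg hα0]
        calc α * |∑ j, beliefStep T B a j * (V j [] - fIter T C α k n (delta j))|
            ≤ α * (α ^ n * M) := mul_le_mul_of_nonneg_left hsum hα0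
          _ = α ^ (n + 1) * M := by ring
      rw [abs_sub_le_iff]
      constructor
      · exact min_sub_min_le.trans (max_le ((le_abs_self _).trans hbl)
          ((le_abs_self _).trans hse))
      · rw [abs_sub_comm] at hbl hse
        exact min_sub_min_le.trans (max_le ((le_abs_self _).trans hbl)
          ((le_abs_self _).trans hse))
    rw [hV s l, show fIter T C α k (n + 1) B = Finset.univ.inf' Finset.univ_nonempty
        (fun a : A => min (beliefCost C B a + α * fIter T C α k n (beliefStep T B a))
          (beliefCost C B a + k + α * ∑ j, beliefStep T B a j * fIter T C α k n (delta j)))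
      from by rw [fIter]]
    rw [abs_sub_le_iff]
    refine ⟨inf'_sub_inf'_le fun a => ?_, inf'_sub_inf'_le fun a => ?_⟩
    · have := key a; rw [abs_sub_le_iff] at this; exact this.1
    · have := key a; rw [abs_sub_le_iff] at this; exact this.2

end Approx

section InfoMono

variable (T : A → Matrix S S ℝ) (C : A → S → ℝ)

/-- Information can only help: the expected informed value under the current belief
is at most the blind value. -/
lemma info_mono {α k : ℝ} (hα0 : 0 < α) (hα1 : α < 1)
    (hTnonneg : ∀ a s s', 0 ≤ T a s s') (hTsum : ∀ a s, ∑ s', T a s s' = 1)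
    (V : S → List A → ℝ) (hV : IsBellmanMk T C α k V)
    (M : ℝ) (hM : ∀ s l, |V s l| ≤ M) (s : S) (l : List A) :
    ∑ j, belief T s l j * V j [] ≤ V s l := by
  set B := belief T s l with hB
  have hBnn : ∀ j, 0 ≤ B j := fun j => belief_nonneg T hTnonneg s l j
  have hB1 : ∑ j, B j = 1 := belief_sum T hTsum s l
  have happrox := fIter_approx T C hα0.le hTnonneg hTsum V hV M hM
  have key : ∀ n : ℕ, ∑ j, B j * V j [] - V s l ≤ 2 * M * α ^ n := by
    intro n
    have h1 : ∑ j, B j * V j [] ≤ ∑ j, B j * fIter T C α k n (delta j) + α ^ n * M := by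
      calc ∑ j, B j * V j []
          ≤ ∑ j, B j * (fIter T C α k n (delta j) + α ^ n * M) := by
            refine Finset.sum_le_sum fun j _ => mul_le_mul_of_nonneg_left ?_ (hBnn j)
            have := happrox n j []
            rw [belief_nil] at this
            rw [abs_sub_le_iff] at this
            linarith [this.1]
        _ = ∑ j, B j * fIter T C α k n (delta j) + α ^ n * M := by
            simp_rw [mul_add]
            rw [Finset.sum_add_distrib]
            have : ∑ j, B j * (α ^ n * M) = α ^ n * M := by
              rw [← Finset.sum_mul, hB1, one_mul]
            rw [this]
    have h2 : ∑ j, B j * fIter T C α k n (delta j) ≤ fIter T C α k n B := by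
      have := fIter_jensen T C (k := k) hα0.le n B delta hBnn hB1
      have hBeq : (fun s' => ∑ j, B j * delta j s') = B := by
        funext s'
        simp [delta, mul_ite]
      rwa [hBeq] at this
    have h3 : fIter T C α k n B ≤ V s l + α ^ n * M := by
      have := happrox n s l
      rw [abs_sub_le_iff] at this
      linarith [this.2]
    linarith
  have htend : Filter.Tendsto (fun n : ℕ => 2 * M * α ^ n) Filter.atTop (nhds 0) := by
    have := tendsto_pow_atTop_nhds_zero_of_lt_one hα0.le hα1
    simpa using this.const_mul (2 * M)
  have := ge_of_tendsto' htend key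
  linarith
end InfoMono

/-- Truncation error bound: for every root state `j` and every depth `N ≥ 0`,
`0 ≤ V*_{M_{k,N}}(j) − V*_{M_k}(j) ≤ α^N k/(1−α)`. -/
theorem truncation_error_bound
    (T : A → Matrix S S ℝ) (C : A → S → ℝ) (α k : ℝ)
    (hα0 : 0 < α) (hα1 : α < 1) (hk : 0 < k)
    (hTnonneg : ∀ a s s', 0 ≤ T a s s') (hTsum : ∀ a s, ∑ s', T a s s' = 1)
    (N : ℕ)
    (V : S → List A → ℝ) (hV : IsBellmanMk T C α k V)
    (hVbdd : ∃ M, ∀ s l, |V s l| ≤ M)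
    (VN : S → List A → ℝ) (hVN : IsBellmanMkTrunc T C α k N VN) :
    ∀ j : S, 0 ≤ VN j [] - V j [] ∧ VN j [] - V j [] ≤ α ^ N * (k / (1 - α)) := by
  classical
  obtain ⟨M, hM⟩ := hVbdd
  have hinfo := info_mono T C hα0 hα1 hTnonneg hTsum V hV M hM
  have hPnn : ∀ (s : S) (l : List A) (a : A) (j : S),
      0 ≤ beliefStep T (belief T s l) a j := fun s l a j => by
    rw [← belief_append]; exact belief_nonneg T hTnonneg s _ j
  have hP1 : ∀ (s : S) (l : List A) (a : A),
      ∑ j, beliefStep T (belief T s l) a j = 1 := fun s l a => by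
    simp only [← belief_append]; exact belief_sum T hTsum s _
  -- sum splitting helper
  have hsplit : ∀ (W W' : S → List A → ℝ) (s : S) (l : List A) (a : A),
      ∑ j, beliefStep T (belief T s l) a j * (W j [] - W' j [])
        = ∑ j, beliefStep T (belief T s l) a j * W j []
          - ∑ j, beliefStep T (belief T s l) a j * W' j [] := by
    intro W W' s l a
    rw [← Finset.sum_sub_distrib]; congr 1; funext j; ring
  -- Part 1: V ≤ VN on roots
  set d := Finset.univ.sup' Finset.univ_nonempty (fun j : S => V j [] - VN j []) with hd
  have hmaxd : 0 ≤ max d 0 := le_max_right _ _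
  have claimA : ∀ (m : ℕ) (s : S) (l : List A), l.length + m = N →
      V s l - VN s l ≤ α * max d 0 := by
    intro m
    induction m with
    | zero =>
      intro s l hl
      rw [Nat.add_zero] at hl
      rw [hV s l, hVN.2 s l hl]
      refine inf'_sub_inf'_le fun a => ?_
      have hsum : ∑ j, beliefStep T (belief T s l) a j * (V j [] - VN j []) ≤ max d 0 :=
        prob_sum_le (hPnn s l a) (hP1 s l a) fun j =>
          le_trans (Finset.le_sup' (fun j : S => V j [] - VN j []) (Finset.mem_univ j))
            (le_max_left _ _)
      rw [hsplit V VN s l a] at hsum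
      have hmin := min_le_right (beliefCost C (belief T s l) a + α * V s (l ++ [a]))
        (beliefCost C (belief T s l) a + k
          + α * ∑ j, beliefStep T (belief T s l) a j * V j [])
      nlinarith [mul_le_mul_of_nonneg_left hsum hα0.le]
    | succ m ihm =>
      intro s l hl
      have hlt : l.length < N := by omega
      rw [hV s l, hVN.1 s l hlt]
      refine inf'_sub_inf'_le fun a => ?_
      refine min_sub_min_le.trans (max_le ?_ ?_)
      · have hih := ihm s (l ++ [a]) (by simp; omega)
        nlinarith [mul_le_mul_of_nonneg_left hih hα0.le,
          mul_nonneg (mul_nonneg hα0.le hmaxd) (show (0:ℝ) ≤ 1 - α by linarith)]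
      · have hsum : ∑ j, beliefStep T (belief T s l) a j * (V j [] - VN j []) ≤ max d 0 :=
          prob_sum_le (hPnn s l a) (hP1 s l a) fun j =>
            le_trans (Finset.le_sup' (fun j : S => V j [] - VN j []) (Finset.mem_univ j))
              (le_max_left _ _)
        rw [hsplit V VN s l a] at hsum
        nlinarith [mul_le_mul_of_nonneg_left hsum hα0.le]
  have hd0 : d ≤ 0 := by
    have hdb : d ≤ α * max d 0 := by
      refine Finset.sup'_le _ _ fun j _ => ?_
      have := claimA N j [] (by simp)
      simpa using this
    rcases le_or_gt d 0 with h | h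
    · exact h
    · rw [max_eq_left h.le] at hdb; nlinarith
  have lower : ∀ j : S, 0 ≤ VN j [] - V j [] := fun j => by
    have := Finset.le_sup' (fun j : S => V j [] - VN j []) (Finset.mem_univ j)
    rw [← hd] at this
    linarith
  -- Part 2: upper bound
  set e := Finset.univ.sup' Finset.univ_nonempty (fun j : S => VN j [] - V j []) with he
  have he0 : 0 ≤ e := by
    have := Finset.le_sup' (fun j : S => VN j [] - V j [])
      (Finset.mem_univ (Classical.arbitrary S))
    rw [← he] at this
    linarith [lower (Classical.arbitrary S)]
  have hesum : ∀ (s : S) (l : List A) (a : A),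
      ∑ j, beliefStep T (belief T s l) a j * VN j []
        - ∑ j, beliefStep T (belief T s l) a j * V j [] ≤ e := by
    intro s l a
    rw [← hsplit VN V s l a]
    exact prob_sum_le (hPnn s l a) (hP1 s l a) fun j =>
      he ▸ Finset.le_sup' (fun j : S => VN j [] - V j []) (Finset.mem_univ j)
  have claimB : ∀ (m : ℕ) (s : S) (l : List A), l.length + m = N →
      VN s l - V s l ≤ max (α ^ m * (k + α * e)) (α * e) := by
    intro m
    induction m with
    | zero =>
      intro s l hl
      rw [Nat.add_zero] at hl
      rw [hVN.2 s l hl, hV s l]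
      refine inf'_sub_inf'_le fun a => ?_
      have h2 : beliefCost C (belief T s l) a + k
            + α * ∑ j, beliefStep T (belief T s l) a j * VN j []
          - (beliefCost C (belief T s l) a + k
            + α * ∑ j, beliefStep T (belief T s l) a j * V j []) ≤ α * e := by
        nlinarith [mul_le_mul_of_nonneg_left (hesum s l a) hα0.le]
      have h1 : beliefCost C (belief T s l) a + k
            + α * ∑ j, beliefStep T (belief T s l) a j * VN j []
          - (beliefCost C (belief T s l) a + α * V s (l ++ [a])) ≤ k + α * e := by
        have hIM : ∑ j, beliefStep T (belief T s l) a j * V j [] ≤ V s (l ++ [a]) := by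
          have := hinfo s (l ++ [a])
          rwa [belief_append] at this
        nlinarith [mul_le_mul_of_nonneg_left
          (show ∑ j, beliefStep T (belief T s l) a j * VN j [] ≤ e + V s (l ++ [a]) by
            have := hesum s l a; linarith) hα0.le]
      rw [pow_zero, one_mul]
      rcases min_cases (beliefCost C (belief T s l) a + α * V s (l ++ [a]))
        (beliefCost C (belief T s l) a + k
          + α * ∑ j, beliefStep T (belief T s l) a j * V j []) with ⟨hm, -⟩ | ⟨hm, -⟩
      · rw [hm]; exact h1.trans (le_max_left _ _)
      · rw [hm]; exact h2.trans (le_max_right _ _)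
    | succ m ihm =>
      intro s l hl
      have hlt : l.length < N := by omega
      rw [hVN.1 s l hlt, hV s l]
      refine inf'_sub_inf'_le fun a => ?_
      refine min_sub_min_le.trans (max_le ?_ ?_)
      · -- blind branch
        have hih := ihm s (l ++ [a]) (by simp; omega)
        have hke : 0 ≤ k + α * e := by nlinarith
        rcases max_cases (α ^ m * (k + α * e)) (α * e) with ⟨hmeq, -⟩ | ⟨hmeq, -⟩ <;>
          rw [hmeq] at hih
        · refine le_trans ?_ (le_max_left (α ^ (m + 1) * (k + α * e)) (α * e))
          have : α * (VN s (l ++ [a]) - V s (l ++ [a])) ≤ α * (α ^ m * (k + α * e)) :=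
            mul_le_mul_of_nonneg_left hih hα0.le
          calc beliefCost C (belief T s l) a + α * VN s (l ++ [a])
              - (beliefCost C (belief T s l) a + α * V s (l ++ [a]))
              = α * (VN s (l ++ [a]) - V s (l ++ [a])) := by ring
            _ ≤ α * (α ^ m * (k + α * e)) := this
            _ = α ^ (m + 1) * (k + α * e) := by ring
        · refine le_trans ?_ (le_max_right (α ^ (m + 1) * (k + α * e)) (α * e))
          nlinarith [mul_le_mul_of_nonneg_left hih hα0.le,
            mul_nonneg (mul_nonneg hα0.le (mul_nonneg hα0.le he0))
              (show (0:ℝ) ≤ 1 - α by linarith)]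
      · -- sense branch
        refine le_trans ?_ (le_max_right (α ^ (m + 1) * (k + α * e)) (α * e))
        nlinarith [mul_le_mul_of_nonneg_left (hesum s l a) hα0.le]
  have heb : e ≤ max (α ^ N * (k + α * e)) (α * e) := by
    refine Finset.sup'_le _ _ fun j _ => ?_
    have := claimB N j [] (by simp)
    simpa using this
  have hebound : e ≤ α ^ N * (k / (1 - α)) := by
    have hαN0 : 0 ≤ α ^ N := pow_nonneg hα0.le N
    have hαN1 : α ^ N ≤ 1 := pow_le_one₀ hα0.le hα1.le
    rcases max_cases (α ^ N * (k + α * e)) (α * e) with ⟨hmeq, -⟩ | ⟨hmeq, -⟩ <;>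
      rw [hmeq] at heb
    · have h1α : (0:ℝ) < 1 - α := by linarith
      rw [show α ^ N * (k / (1 - α)) = α ^ N * k / (1 - α) by ring, le_div_iff₀ h1α]
      nlinarith [mul_le_mul_of_nonneg_right hαN1 (mul_nonneg hα0.le he0)]
    · have : e ≤ 0 := by nlinarith
      have hpos : 0 ≤ α ^ N * (k / (1 - α)) := by
        have h1α : (0:ℝ) < 1 - α := by linarith
        positivity
      linarith
  intro j
  refine ⟨lower j, ?_⟩
  have := Finset.le_sup' (fun j : S => VN j [] - V j []) (Finset.mem_univ j)
  rw [← he] at this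
  linarith
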